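/- arXiv:2006.01558 — 4 statements merged into one kernel-verified Lean document; each statement's English description precedes it below -/
import Mathlib

section
/- Closedness of touching points: Let θ⁺, θ⁻ ∈ ℝ with θ⁺ − θ⁻ ∈ 𝒢_𝔸, let τ⁺, τ⁻ ∈ ℝ², and let (τ⁺_n)_n, (τ⁻_n)_n ⊂ ℝ² with τ⁺_n → τ⁺ and τ⁻_n → τ⁻. For x ∈ 𝓛(θ⁺,τ⁺,1) and y ∈ 𝓛(θ⁻,τ⁻,1) set x_n := x + e^{iθ⁺}(τ⁺_n − τ⁺) ∈ 𝓛(θ⁺,τ⁺_n,1) and y_n := y + e^{iθ⁻}(τ⁻_n − τ⁻) ∈ 𝓛(θ⁻,τ⁻_n,1). Then there exists n₀ ∈ ℕ such that for all n ≥ n₀ and for ALL x ∈ 𝓛(θ⁺,τ⁺,1) and y ∈ 𝓛(θ⁻,τ⁻,1): (i) |x − y| < 1 implies |x_n − y_n| < 1, and (ii) |x − y| > 1 implies |x_n − y_n| > 1. In particular, if |x_n − y_n| = 1 for some n ≥ n₀, then |x − y| = 1. -/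
open Filter Set

noncomputable section

namespace HeitmannRadin

/-- The rotation `e^{iθ}` as a complex number. -/
def rot (θ : ℝ) : ℂ := Complex.exp ((θ : ℂ) * Complex.I)

/-- `ω = 1/2 + (√3/2) i`. -/
def omega : ℂ := 1 / 2 + (Real.sqrt 3 / 2 : ℝ) * Complex.I

/-- The triangular lattice `𝓛 = {p + qω : p, q ∈ ℤ}`. -/
def Lat : Set ℂ := {z : ℂ | ∃ p q : ℤ, z = (p : ℂ) + (q : ℂ) * omega}

/-- A lattice isometry: `none` is the vacuum `𝟎`, `some (θ, τ)` is the triple `(θ, τ, 1)`. -/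
abbrev LatIso := Option (ℝ × ℂ)

/-- The lattice `𝓛(z)` of a lattice isometry: `𝓛(θ,τ,1) = e^{iθ}(𝓛 + τ)`, `𝓛(𝟎) = ∅`. -/
def latt : LatIso → Set ℂ
  | none => ∅
  | some z => (fun v => rot z.1 * (v + z.2)) '' Lat

/-- The scaled lattice `ε𝓛(z)`. -/
def scaledLatt (ε : ℝ) (z : LatIso) : Set ℂ := (fun v => (ε : ℂ) * v) '' latt z

/-- A finite configuration is ε-admissible if distinct points have mutual distance ≥ ε. -/
def Admissible (ε : ℝ) (X : Finset ℂ) : Prop :=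
  ∀ x ∈ X, ∀ y ∈ X, x ≠ y → ε ≤ dist x y

/-- The number of ε-neighbors `#𝒩_ε(x)` of `x` in the configuration `X`. -/
def nbhd (ε : ℝ) (X : Finset ℂ) (x : ℂ) : ℕ :=
  {y ∈ (X : Set ℂ) | dist x y = ε}.ncard

/-- The localized energy `E_ε(X, B) = (1/2)∑_{x ∈ X ∩ B} ε(6 − #𝒩_ε(x))`. -/
def energy (ε : ℝ) (X : Finset ℂ) (B : Set ℂ) : ℝ :=
  (1 / 2) * ∑ x ∈ X, B.indicator (fun _ => ε * (6 - (nbhd ε X x : ℝ))) x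

/-- `ν` rotated clockwise by `π/2`. -/
def perp (ν : ℂ) : ℂ := -Complex.I * ν

/-- The inner product of `ℝ²` read through `ℂ`. -/
def rinner (w v : ℂ) : ℝ := (w * (starRingEnd ℂ) v).re

/-- The half-open unit cube `Q^ν`. -/
def Qunit (ν : ℂ) : Set ℂ :=
  {w : ℂ | -(1 / 2) ≤ rinner w ν ∧ rinner w ν < 1 / 2 ∧
    -(1 / 2) ≤ rinner w (perp ν) ∧ rinner w (perp ν) < 1 / 2}

/-- The scaled cube `r Q^ν` (centered at the origin). -/
def Qs (ν : ℂ) (r : ℝ) : Set ℂ := (fun u => (r : ℂ) * u) '' Qunit ν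

/-- The cube `Q^ν_ρ(x₀) = x₀ + ρ Q^ν`. -/
def Qc (ν : ℂ) (ρ : ℝ) (x₀ : ℂ) : Set ℂ := (fun u => x₀ + u) '' Qs ν ρ

/-- The boundary regions `∂^±_ε Q^ν_ρ(x₀)`; `true` stands for `+`, `false` for `−`. -/
def bdry (ε : ℝ) (ν : ℂ) (ρ : ℝ) (x₀ : ℂ) (s : Bool) : Set ℂ :=
  (fun u => x₀ + u) ''
    {w ∈ closure (Qs ν (ρ + 10 * ε) \ Qs ν (ρ - 10 * ε)) |
      5 * ε ≤ if s then rinner ν w else -(rinner ν w)}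

/-- The boundary conditions `X = ε𝓛(z⁺)` on `∂⁺_ε Q^ν_ρ(x₀)` and `X = ε𝓛(z⁻)` on
`∂⁻_ε Q^ν_ρ(x₀)`. -/
def BC (ε : ℝ) (ν : ℂ) (ρ : ℝ) (x₀ : ℂ) (zp zm : LatIso) (X : Finset ℂ) : Prop :=
  (X : Set ℂ) ∩ bdry ε ν ρ x₀ true = scaledLatt ε zp ∩ bdry ε ν ρ x₀ true ∧
  (X : Set ℂ) ∩ bdry ε ν ρ x₀ false = scaledLatt ε zm ∩ bdry ε ν ρ x₀ false

/-- The minimal cell energy `m_ε(z⁺,z⁻,ν,ρ,x₀)`. -/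
def mVal (ε : ℝ) (zp zm : LatIso) (ν : ℂ) (ρ : ℝ) (x₀ : ℂ) : ℝ :=
  sInf {e : ℝ | ∃ X : Finset ℂ, Admissible ε X ∧ BC ε ν ρ x₀ zp zm X ∧
    e = energy ε X (Qc ν ρ x₀)}

/-- The cell energy infimized also over the centers (at lattice spacing 1). -/
def cellInf (zp zm : LatIso) (ν : ℂ) (T : ℝ) : ℝ :=
  sInf {e : ℝ | ∃ (y : ℂ) (X : Finset ℂ), Admissible 1 X ∧ BC 1 ν T y zp zm X ∧
    e = energy 1 X (Qc ν T y)}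

/-- The density `φ̄(z⁺,z⁻,ν)`. -/
def phiBar (zp zm : LatIso) (ν : ℂ) : ℝ :=
  Filter.liminf (fun T : ℝ => (1 / T) * cellInf zp zm ν T) Filter.atTop

/-- The hexagonal density `φ_hex(ξ) = (2/√3)∑_{k=1}^{3}|⟨ξ, ω^k⟩|`. -/
def phiHex (ξ : ℂ) : ℝ := (2 / Real.sqrt 3) * ∑ k ∈ Finset.range 3, |rinner ξ (omega ^ (k + 1))|

/-- The set of good angles `𝒢_𝔸`. -/
def goodAngle (θ : ℝ) : Prop :=
  ∃ v₁ ∈ Lat, ∃ v₂ ∈ Lat, v₁ ≠ 0 ∧ v₂ ≠ 0 ∧ rot θ = v₁ / v₂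

/-- Convergence of angles modulo `π/3` as `T → +∞`. -/
def ModAngleTendsto (f : ℝ → ℝ) (θ : ℝ) : Prop :=
  ∃ k : ℝ → ℤ, Filter.Tendsto (fun T => f T - θ - Real.pi / 3 * (k T : ℝ)) Filter.atTop (nhds 0)

/-- Convergence of translations modulo `𝓛` as `T → +∞`. -/
def ModLatTendsto (f : ℝ → ℂ) (τ : ℂ) : Prop :=
  ∃ v : ℝ → ℂ, (∀ T, v T ∈ Lat) ∧ Filter.Tendsto (fun T => f T - τ - v T) Filter.atTop (nhds 0)

/-- Convergence in the state space `𝒵`. -/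
def ZTendsto (f : ℝ → LatIso) : LatIso → Prop
  | none => ∀ᶠ T in Filter.atTop, f T = none
  | some z => ∃ (θf : ℝ → ℝ) (τf : ℝ → ℂ), (∀ᶠ T in Filter.atTop, f T = some (θf T, τf T)) ∧
      ModAngleTendsto θf z.1 ∧ ModLatTendsto τf z.2

/-- The cell formula `Φ(z⁺,z⁻,ν)` with converging boundary values. -/
def PhiVal (zp zm : LatIso) (ν : ℂ) : ℝ :=
  sInf {L : ℝ | ∃ fp fm : ℝ → LatIso, ZTendsto fp zp ∧ ZTendsto fm zm ∧
    L = Filter.liminf (fun T : ℝ => (1 / T) * cellInf (fp T) (fm T) ν T) Filter.atTop}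

/-- Two points of `Y` are joined by a chain in `Y` with consecutive distances 1. -/
def Chain (Y : Set ℂ) (x y : ℂ) : Prop :=
  ∃ (n : ℕ) (v : ℕ → ℂ), v 0 = x ∧ v n = y ∧ (∀ i ≤ n, v i ∈ Y) ∧
    ∀ i < n, dist (v i) (v (i + 1)) = 1

/-- A configuration is connected if all pairs of its points are joined by chains. -/
def ConnectedConf (Y : Set ℂ) : Prop := ∀ x ∈ Y, ∀ y ∈ Y, Chain Y x y

/-- A configuration is strongly connected if moreover removing any point keeps it connected. -/
def StronglyConnectedConf (Y : Set ℂ) : Prop :=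
  ConnectedConf Y ∧ ∀ x ∈ Y, ConnectedConf (Y \ {x})

open Classical in
/-- The boundary `∂Y` of `Y` inside `Q`. -/
def confBdry (Y : Finset ℂ) (Q : Set ℂ) : Finset ℂ :=
  Y.filter fun x => x ∈ Q ∧ {y' ∈ (Y : Set ℂ) | dist x y' = 1}.ncard < 6

/-- The maximal component `M^±` of strongly connected subsets of `X ∩ 𝓛(z)` meeting the
boundary region on side `s`. -/
def maxComp (X : Finset ℂ) (z : LatIso) (ν : ℂ) (T : ℝ) (y : ℂ) (s : Bool) : Set ℂ :=
  {x : ℂ | ∃ Z : Set ℂ, Z ⊆ (X : Set ℂ) ∩ latt z ∧ (Z ∩ bdry 1 ν T y s).Nonempty ∧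
    StronglyConnectedConf Z ∧ x ∈ Z}

/-!
For a good relative angle the two lattices are commensurable: all distances between a point of
`𝓛(θ⁺,τ⁺,1)` and a point of `𝓛(θ⁻,τ⁻,1)` are of the form `|w + c|/r` with `w ∈ 𝓛` and fixed
`c`, `r`. Only finitely many of them lie below `2`, so `1` is isolated among these distances by
some gap `δ > 0`. Once `|τ⁺_n - τ⁺| + |τ⁻_n - τ⁻| < δ`, each distance moves by less than `δ` and
hence stays on its side of `1`.
-/

lemma omega_sq : omega ^ 2 = omega - 1 := by
  have h3 : ((Real.sqrt 3 : ℝ) : ℂ) ^ 2 = 3 := by norm_cast; simp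
  simp only [omega]
  push_cast
  linear_combination Complex.I ^ 2 / 4 * h3 + 3 / 4 * Complex.I_sq

lemma mul_mem_Lat {a b : ℂ} (ha : a ∈ Lat) (hb : b ∈ Lat) : a * b ∈ Lat := by
  obtain ⟨p, q, rfl⟩ := ha
  obtain ⟨p', q', rfl⟩ := hb
  refine ⟨p * p' - q * q', p * q' + q * p' + q * q', ?_⟩
  push_cast
  linear_combination q * q' * omega_sq

lemma sub_mem_Lat {a b : ℂ} (ha : a ∈ Lat) (hb : b ∈ Lat) : a - b ∈ Lat := by
  obtain ⟨p, q, rfl⟩ := ha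
  obtain ⟨p', q', rfl⟩ := hb
  exact ⟨p - p', q - q', by push_cast; ring⟩

lemma linearIndependent_one_omega : LinearIndependent ℝ ![1, omega] := by
  refine LinearIndependent.pair_iff.mpr fun s t hst => ?_
  have ht : t = 0 := by simpa [omega] using congrArg Complex.im hst
  exact ⟨by simpa [omega, ht] using congrArg Complex.re hst, ht⟩

def latBasis : Module.Basis (Fin 2) ℝ ℂ :=
  basisOfLinearIndependentOfCardEqFinrank linearIndependent_one_omega
    (by rw [Complex.finrank_real_complex]; rfl)

lemma Lat_eq_span : Lat = Submodule.span ℤ (Set.range latBasis) := by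
  ext z
  simp only [latBasis, coe_basisOfLinearIndependentOfCardEqFinrank, Matrix.range_cons,
    Matrix.range_empty, Set.union_empty, Set.singleton_union, SetLike.mem_coe,
    Submodule.mem_span_pair, zsmul_eq_mul, mul_one]
  exact ⟨fun ⟨p, q, h⟩ => ⟨p, q, h.symm⟩, fun ⟨p, q, h⟩ => ⟨p, q, h.symm⟩⟩

lemma Bornology.IsBounded.finite_inter_Lat {s : Set ℂ} (hs : Bornology.IsBounded s) :
    (s ∩ Lat).Finite := by
  rw [Lat_eq_span]
  exact ZSpan.setFinite_inter latBasis hs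

lemma norm_rot (θ : ℝ) : ‖rot θ‖ = 1 := Complex.norm_exp_ofReal_mul_I θ

lemma rot_sub (a b : ℝ) : rot (a - b) = rot a / rot b := by
  simp only [rot]
  rw [← Complex.exp_sub]
  push_cast
  ring_nf

lemma exists_pos_le_dist_of_finite_inter_ball {X : Type*} [MetricSpace X] {S : Set X} {t : X}
    {r : ℝ} (hr : 0 < r) (hS : (S ∩ Metric.ball t r).Finite) :
    ∃ δ > 0, ∀ s ∈ S, s ≠ t → δ ≤ dist s t := by
  have hF : ((S ∩ Metric.ball t r) \ {t}).Finite := hS.subset sdiff_subset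
  obtain ⟨ε, hε, hball⟩ := Metric.isOpen_iff.mp hF.isClosed.isOpen_compl t (by simp)
  refine ⟨min ε r, lt_min hε hr, fun s hs hst => ?_⟩
  by_contra! h
  exact hball (Metric.mem_ball.mpr (h.trans_le (min_le_left _ _)))
    ⟨⟨hs, Metric.mem_ball.mpr (h.trans_le (min_le_right _ _))⟩, hst⟩

lemma finite_image_norm_add_div_inter_Iic (c : ℂ) {r : ℝ} (hr : 0 < r) (R : ℝ) :
    ((fun w => ‖w + c‖ / r) '' Lat ∩ Iic R).Finite := by
  refine ((Bornology.IsBounded.finite_inter_Lat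
    (Metric.isBounded_closedBall (x := -c) (r := R * r))).image
    (fun w => ‖w + c‖ / r)).subset ?_
  rintro _ ⟨⟨w, hw, rfl⟩, hR⟩
  refine ⟨w, ⟨?_, hw⟩, rfl⟩
  rw [mem_Iic, div_le_iff₀ hr] at hR
  rwa [Metric.mem_closedBall, dist_eq_norm, sub_neg_eq_add]

/-- If `e^{i(θ⁺-θ⁻)} = v₁/v₂`, then `v₂(x - y) = e^{iθ⁻}(v₁a - v₂b + v₁τ⁺ - v₂τ⁻)` for
`x = e^{iθ⁺}(a + τ⁺)`, `y = e^{iθ⁻}(b + τ⁻)`, and `v₁a - v₂b ∈ 𝓛` since `𝓛` is a ring. -/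
lemma exists_mem_Lat_dist_eq {θp θm : ℝ} (hgood : goodAngle (θp - θm)) (τp τm : ℂ) :
    ∃ r > 0, ∃ c : ℂ, ∀ x ∈ latt (some (θp, τp)), ∀ y ∈ latt (some (θm, τm)),
      ∃ w ∈ Lat, dist x y = ‖w + c‖ / r := by
  obtain ⟨v₁, hv₁, v₂, hv₂, -, hv₂0, hrot⟩ := hgood
  have hkey : rot θp * v₂ = v₁ * rot θm := by
    have hθm : rot θm ≠ 0 := Complex.exp_ne_zero _
    rwa [rot_sub, div_eq_div_iff hθm hv₂0] at hrot
  refine ⟨‖v₂‖, norm_pos_iff.mpr hv₂0, v₁ * τp - v₂ * τm, ?_⟩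
  rintro _ ⟨a, ha, rfl⟩ _ ⟨b, hb, rfl⟩
  refine ⟨v₁ * a - v₂ * b, sub_mem_Lat (mul_mem_Lat hv₁ ha) (mul_mem_Lat hv₂ hb), ?_⟩
  have hmul : (rot θp * (a + τp) - rot θm * (b + τm)) * v₂ =
      rot θm * (v₁ * a - v₂ * b + (v₁ * τp - v₂ * τm)) := by
    linear_combination (a + τp) * hkey
  rw [eq_div_iff (norm_ne_zero_iff.mpr hv₂0), dist_eq_norm, ← norm_mul, hmul, norm_mul,
    norm_rot, one_mul]

lemma goodAngle.exists_gap_dist_one {θp θm : ℝ} (hgood : goodAngle (θp - θm)) (τp τm : ℂ) :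
    ∃ δ > 0, ∀ x ∈ latt (some (θp, τp)), ∀ y ∈ latt (some (θm, τm)),
      dist x y ≠ 1 → δ ≤ |dist x y - 1| := by
  obtain ⟨r, hr, c, hdist⟩ := exists_mem_Lat_dist_eq hgood τp τm
  have hfin : ((fun w => ‖w + c‖ / r) '' Lat ∩ Metric.ball 1 1).Finite := by
    refine (finite_image_norm_add_div_inter_Iic c hr 2).subset
      (inter_subset_inter_right _ fun d hd => ?_)
    rw [Metric.mem_ball, Real.dist_eq, abs_lt] at hd
    exact mem_Iic.mpr (by linarith)
  obtain ⟨δ, hδ, hgap⟩ := exists_pos_le_dist_of_finite_inter_ball one_pos hfin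
  refine ⟨δ, hδ, fun x hx y hy hne => ?_⟩
  obtain ⟨w, hw, hxy⟩ := hdist x hx y hy
  rw [hxy] at hne ⊢
  exact hgap _ ⟨w, hw, rfl⟩ hne

lemma abs_dist_add_rot_mul_sub_dist_le (x y s t : ℂ) (a b : ℝ) :
    |dist (x + rot a * s) (y + rot b * t) - dist x y| ≤ ‖s‖ + ‖t‖ := by
  simpa [Real.dist_eq, norm_mul, norm_rot] using
    dist_dist_dist_le (x + rot a * s) (y + rot b * t) x y

lemma sides_of_one_of_abs_sub_lt {d d' δ : ℝ} (hgap : d ≠ 1 → δ ≤ |d - 1|)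
    (hd : |d' - d| < δ) : (d < 1 → d' < 1) ∧ (1 < d → 1 < d') ∧ (d' = 1 → d = 1) := by
  obtain ⟨hlo, hhi⟩ := abs_lt.mp hd
  have below : d < 1 → d' < 1 := fun h => by
    have := hgap h.ne
    rw [abs_of_neg (by linarith)] at this
    linarith
  have above : 1 < d → 1 < d' := fun h => by
    have := hgap h.ne'
    rw [abs_of_pos (by linarith)] at this
    linarith
  refine ⟨below, above, fun h => ?_⟩
  rcases lt_trichotomy d 1 with h1 | h1 | h1
  · exact absurd h (below h1).ne
  · exact h1
  · exact absurd h (above h1).ne'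

/-- Closedness of touching points. -/
theorem closedness_of_touching_points (θp θm : ℝ) (hgood : goodAngle (θp - θm))
    (τp τm : ℂ) (τpn τmn : ℕ → ℂ)
    (hp : Filter.Tendsto τpn Filter.atTop (nhds τp))
    (hm : Filter.Tendsto τmn Filter.atTop (nhds τm)) :
    ∃ n₀ : ℕ, ∀ n ≥ n₀, ∀ x ∈ latt (some (θp, τp)), ∀ y ∈ latt (some (θm, τm)),
      (dist x y < 1 →
        dist (x + rot θp * (τpn n - τp)) (y + rot θm * (τmn n - τm)) < 1) ∧
      (1 < dist x y →
        1 < dist (x + rot θp * (τpn n - τp)) (y + rot θm * (τmn n - τm))) ∧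
      (dist (x + rot θp * (τpn n - τp)) (y + rot θm * (τmn n - τm)) = 1 →
        dist x y = 1) := by
  obtain ⟨δ, hδ, hgap⟩ := hgood.exists_gap_dist_one τp τm
  have hshift : Tendsto (fun n => ‖τpn n - τp‖ + ‖τmn n - τm‖) atTop (nhds 0) := by
    simpa using (tendsto_iff_norm_sub_tendsto_zero.mp hp).add
      (tendsto_iff_norm_sub_tendsto_zero.mp hm)
  obtain ⟨n₀, hn₀⟩ := eventually_atTop.mp (hshift.eventually (gt_mem_nhds hδ))
  refine ⟨n₀, fun n hn x hx y hy => sides_of_one_of_abs_sub_lt (hgap x hx y hy) ?_⟩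
  exact (abs_dist_add_rot_mul_sub_dist_le _ _ _ _ _ _).trans_lt (hn₀ n hn)

end HeitmannRadin
end
end

section
/- Good translations lie on finitely many unit spheres: Let θ⁺, θ⁻ ∈ ℝ with θ⁺ − θ⁻ ∈ 𝒢_𝔸. Then there exists a finite set F ⊂ {y' − x' : x' ∈ e^{iθ⁺}𝓛, y' ∈ e^{iθ⁻}𝓛} such that for all τ⁺, τ⁻ ∈ ℝ² of the form λ₁ + λ₂ω with λ₁, λ₂ ∈ [0,1): if there exist x ∈ 𝓛(θ⁺,τ⁺,1) and y ∈ 𝓛(θ⁻,τ⁻,1) with |x − y| = 1, then |e^{iθ⁺}τ⁺ − e^{iθ⁻}τ⁻ − c| = 1 for some c ∈ F. In other words, the set of good translations is contained in a finite union of spheres of radius 1. -/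
open Filter Set

noncomputable section

namespace HeitmannRadin

lemma omega_re : omega.re = 1 / 2 := by simp [omega]

lemma omega_im : omega.im = Real.sqrt 3 / 2 := by simp [omega]

lemma norm_omega : ‖omega‖ = 1 := by
  have h3 := Real.mul_self_sqrt (show (0 : ℝ) ≤ 3 by norm_num)
  rw [Complex.norm_def, Complex.normSq_apply, omega_re, omega_im, ← Real.sqrt_one]
  congr 1
  linear_combination h3 / 4

lemma finite_Lat_norm_le (R : ℝ) : {u ∈ Lat | ‖u‖ ≤ R}.Finite := by
  refine ((isCompact_closedBall (0 : ℤ × ℤ) (2 * R)).finite_of_discrete.image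
    fun pq : ℤ × ℤ => (pq.1 : ℂ) + (pq.2 : ℂ) * omega).subset ?_
  rintro u ⟨⟨p, q, rfl⟩, hu⟩
  refine ⟨(p, q), ?_, rfl⟩
  have him : |(q : ℝ)| * (Real.sqrt 3 / 2) ≤ R := by
    have := (Complex.abs_im_le_norm _).trans hu
    simpa [omega_im, abs_mul, abs_of_nonneg (by positivity : 0 ≤ Real.sqrt 3 / 2)] using this
  have hre : |(p : ℝ) + q / 2| ≤ R := by
    have := (Complex.abs_re_le_norm _).trans hu
    simpa [omega_re, div_eq_mul_inv] using this
  have hsqrt : 1 ≤ Real.sqrt 3 := Real.one_le_sqrt.2 (by norm_num)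
  have hq : |(q : ℝ)| ≤ 2 * R := by nlinarith [abs_nonneg (q : ℝ)]
  have hp : |(p : ℝ)| ≤ 2 * R := by
    obtain ⟨hq₁, hq₂⟩ := abs_le.1 hq
    obtain ⟨hr₁, hr₂⟩ := abs_le.1 hre
    exact abs_le.2 ⟨by linarith, by linarith⟩
  simpa [Prod.norm_def, Int.norm_eq_abs] using And.intro hp hq

lemma norm_rot_mul (θ : ℝ) (z : ℂ) : ‖rot θ * z‖ = ‖z‖ := by
  rw [norm_mul, rot, Complex.norm_exp_ofReal_mul_I, one_mul]

lemma rot_sub_mul_rot (θ φ : ℝ) : rot (θ - φ) * rot φ = rot θ := by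
  simp only [rot, ← Complex.exp_add]
  push_cast
  ring_nf

lemma finite_rot_Lat_sub_norm_le {θp θm : ℝ} (hgood : goodAngle (θp - θm)) (R : ℝ) :
    {c | (∃ x' ∈ Lat, ∃ y' ∈ Lat, c = rot θm * y' - rot θp * x') ∧ ‖c‖ ≤ R}.Finite := by
  obtain ⟨v₁, hv₁, v₂, hv₂, -, hv₂0, hrot⟩ := hgood
  have hscale : ∀ x' y' : ℂ,
      rot θm * y' - rot θp * x' = rot θm / v₂ * (v₂ * y' - v₁ * x') := by
    intro x' y'
    rw [← rot_sub_mul_rot θp θm, hrot]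
    field_simp
  refine ((finite_Lat_norm_le (R * ‖v₂‖)).image (rot θm / v₂ * ·)).subset ?_
  rintro c ⟨⟨x', hx', y', hy', rfl⟩, hc⟩
  refine ⟨v₂ * y' - v₁ * x', ⟨sub_mem_Lat (mul_mem_Lat hv₂ hy') (mul_mem_Lat hv₁ hx'), ?_⟩,
    (hscale x' y').symm⟩
  rw [hscale, norm_mul, div_eq_mul_inv, norm_rot_mul, norm_inv] at hc
  rwa [inv_mul_le_iff₀ (norm_pos_iff.2 hv₂0), mul_comm ‖v₂‖] at hc

lemma norm_add_mul_omega_le (l₁ l₂ : ℝ) : ‖(l₁ : ℂ) + (l₂ : ℂ) * omega‖ ≤ |l₁| + |l₂| := by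
  calc ‖(l₁ : ℂ) + (l₂ : ℂ) * omega‖ ≤ ‖(l₁ : ℂ)‖ + ‖(l₂ : ℂ) * omega‖ := norm_add_le _ _
    _ = |l₁| + |l₂| := by rw [norm_mul, norm_omega, mul_one, Complex.norm_real,
      Complex.norm_real, Real.norm_eq_abs, Real.norm_eq_abs]

lemma norm_le_of_norm_sub_sub_eq_one {E : Type*} [SeminormedAddCommGroup E] {a b c : E}
    (h : ‖a - b - c‖ = 1) : ‖c‖ ≤ ‖a‖ + ‖b‖ + 1 :=
  calc ‖c‖ = ‖(a - b) - (a - b - c)‖ := by rw [sub_sub_cancel]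
    _ ≤ ‖a - b‖ + ‖a - b - c‖ := norm_sub_le _ _
    _ ≤ ‖a‖ + ‖b‖ + 1 := by rw [h]; linarith [norm_sub_le a b]

/-- Good translations lie on finitely many unit spheres. -/
theorem good_translations_on_finitely_many_spheres (θp θm : ℝ)
    (hgood : goodAngle (θp - θm)) :
    ∃ F : Finset ℂ,
      (∀ c ∈ F, ∃ x' ∈ Lat, ∃ y' ∈ Lat, c = rot θm * y' - rot θp * x') ∧
      ∀ lp1 lp2 lm1 lm2 : ℝ, 0 ≤ lp1 → lp1 < 1 → 0 ≤ lp2 → lp2 < 1 →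
        0 ≤ lm1 → lm1 < 1 → 0 ≤ lm2 → lm2 < 1 →
        (∃ x ∈ latt (some (θp, (lp1 : ℂ) + (lp2 : ℂ) * omega)),
          ∃ y ∈ latt (some (θm, (lm1 : ℂ) + (lm2 : ℂ) * omega)), dist x y = 1) →
        ∃ c ∈ F,
          ‖rot θp * ((lp1 : ℂ) + (lp2 : ℂ) * omega) -
            rot θm * ((lm1 : ℂ) + (lm2 : ℂ) * omega) - c‖ = 1 := by
  have hfin := finite_rot_Lat_sub_norm_le hgood 5
  refine ⟨hfin.toFinset, fun c hc => (hfin.mem_toFinset.1 hc).1, ?_⟩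
  intro lp1 lp2 lm1 lm2 hp1 hp1' hp2 hp2' hm1 hm1' hm2 hm2'
    ⟨_, ⟨x', hx', rfl⟩, _, ⟨y', hy', rfl⟩, hdist⟩
  set τp : ℂ := (lp1 : ℂ) + (lp2 : ℂ) * omega
  set τm : ℂ := (lm1 : ℂ) + (lm2 : ℂ) * omega
  have hτp : ‖rot θp * τp‖ ≤ 2 := by
    rw [norm_rot_mul]
    linarith [norm_add_mul_omega_le lp1 lp2, abs_of_nonneg hp1, abs_of_nonneg hp2]
  have hτm : ‖rot θm * τm‖ ≤ 2 := by
    rw [norm_rot_mul]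
    linarith [norm_add_mul_omega_le lm1 lm2, abs_of_nonneg hm1, abs_of_nonneg hm2]
  have hsphere : ‖rot θp * τp - rot θm * τm - (rot θm * y' - rot θp * x')‖ = 1 := by
    rw [← hdist, dist_eq_norm]
    ring_nf
  refine ⟨_, hfin.mem_toFinset.2 ⟨⟨x', hx', y', hy', rfl⟩, ?_⟩, hsphere⟩
  linarith [norm_le_of_norm_sub_sub_eq_one hsphere]

end HeitmannRadin
end
end

section
/- Rotational invariance of the surface energy density (Theorem 'Properties of φ'(iv)): For all θ⁺, θ⁻ ∈ ℝ, all τ⁺, τ⁻ ∈ ℝ², all ν ∈ S¹ and all θ ∈ ℝ one has φ̄((θ⁺+θ, τ⁺, 1), (θ⁻+θ, τ⁻, 1), e^{iθ}ν) = φ̄((θ⁺, τ⁺, 1), (θ⁻, τ⁻, 1), ν). -/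
open Filter Set

noncomputable section

namespace HeitmannRadin

/-!
A rotation `x ↦ e^{iθ} x` is an isometry of the plane. It carries the cube `Q^ν_T(y)` and its
boundary layers `∂^±_1 Q^ν_T(y)` onto those of `Q^{e^{iθ}ν}_T(e^{iθ}y)`, and the lattice
`𝓛(θ', τ, 1)` onto `𝓛(θ' + θ, τ, 1)`. Hence it maps the competitors of one cell problem
bijectively onto those of the rotated one without changing their energy, so the cell infima
agree for every `T`, and so do their liminfs.
-/

section Isometry

variable {f : ℂ → ℂ}

lemma Admissible.image (hf : Isometry f) {ε : ℝ} {X : Finset ℂ} (hX : Admissible ε X) :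
    Admissible ε (X.image f) := by
  simp only [Admissible, Finset.forall_mem_image, hf.dist_eq]
  exact fun x hx y hy hxy => hX x hx y hy fun h => hxy (congrArg f h)

lemma nbhd_image (hf : Isometry f) (ε : ℝ) (X : Finset ℂ) (x : ℂ) :
    nbhd ε (X.image f) (f x) = nbhd ε X x := by
  have hset : {y ∈ ((X.image f : Finset ℂ) : Set ℂ) | dist (f x) y = ε} =
      f '' {y ∈ (X : Set ℂ) | dist x y = ε} := by
    ext y
    simp only [Finset.coe_image, mem_image, Finset.mem_coe]
    constructor
    · rintro ⟨⟨u, hu, rfl⟩, hd⟩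
      exact ⟨u, ⟨hu, by rwa [hf.dist_eq] at hd⟩, rfl⟩
    · rintro ⟨u, ⟨hu, hd⟩, rfl⟩
      exact ⟨⟨u, hu, rfl⟩, by rwa [hf.dist_eq]⟩
  rw [nbhd, nbhd, hset, ncard_image_of_injective _ hf.injective]

lemma energy_image (hf : Isometry f) (ε : ℝ) (X : Finset ℂ) (B : Set ℂ) :
    energy ε (X.image f) (f '' B) = energy ε X B := by
  simp only [energy, Finset.sum_image hf.injective.injOn, indicator_image hf.injective,
    Function.comp_def, nbhd_image hf]

end Isometry

lemma perp_mul (a ν : ℂ) : perp (a * ν) = a * perp ν := by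
  simp only [perp]; ring

section Rotation

variable (u : Circle)

lemma isometry_circle_mul : Isometry ((u : ℂ) * ·) :=
  Isometry.of_dist_eq fun x y => by
    rw [dist_eq_norm, dist_eq_norm, ← mul_sub, norm_mul, Circle.norm_coe, one_mul]

lemma rinner_circle_mul (w v : ℂ) : rinner (u * w) (u * v) = rinner w v := by
  have hu : (u : ℂ) * starRingEnd ℂ u = 1 := by
    rw [Complex.mul_conj, Circle.normSq_coe, Complex.ofReal_one]
  rw [rinner, rinner, map_mul, mul_mul_mul_comm, hu, one_mul]

lemma mem_circle_mul_image {S : Set ℂ} {w : ℂ} :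
    w ∈ ((u : ℂ) * ·) '' S ↔ (u : ℂ)⁻¹ * w ∈ S := by
  constructor
  · rintro ⟨v, hv, rfl⟩
    rwa [inv_mul_cancel_left₀ u.coe_ne_zero]
  · exact fun h => ⟨_, h, mul_inv_cancel_left₀ u.coe_ne_zero w⟩

lemma rinner_circle_mul_left (w v : ℂ) : rinner (u * w) v = rinner w ((u : ℂ)⁻¹ * v) := by
  rw [← rinner_circle_mul u w, mul_inv_cancel_left₀ u.coe_ne_zero]

lemma rinner_circle_mul_right (w v : ℂ) : rinner w (u * v) = rinner ((u : ℂ)⁻¹ * w) v := by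
  rw [← rinner_circle_mul u _ v, mul_inv_cancel_left₀ u.coe_ne_zero]

lemma Qunit_circle_mul (ν : ℂ) : Qunit (u * ν) = ((u : ℂ) * ·) '' Qunit ν := by
  ext w
  simp only [mem_circle_mul_image, Qunit, mem_ofPred_eq, rinner_circle_mul_right, perp_mul]

lemma Qs_circle_mul (ν : ℂ) (r : ℝ) : Qs (u * ν) r = ((u : ℂ) * ·) '' Qs ν r := by
  simp only [Qs, Qunit_circle_mul, image_image, mul_left_comm]

lemma Qc_circle_mul (ν : ℂ) (r : ℝ) (x₀ : ℂ) :
    Qc (u * ν) r (u * x₀) = ((u : ℂ) * ·) '' Qc ν r x₀ := by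
  simp only [Qc, Qs_circle_mul, image_image, mul_add]

lemma bdry_circle_mul (ε : ℝ) (ν : ℂ) (ρ : ℝ) (x₀ : ℂ) (s : Bool) :
    bdry ε (u * ν) ρ (u * x₀) s = ((u : ℂ) * ·) '' bdry ε ν ρ x₀ s := by
  have hclosure (S : Set ℂ) : closure (((u : ℂ) * ·) '' S) = ((u : ℂ) * ·) '' closure S := by
    simpa using ((Homeomorph.mulLeft₀ (u : ℂ) u.coe_ne_zero).image_closure S).symm
  have hlayer : {w ∈ closure (Qs (u * ν) (ρ + 10 * ε) \ Qs (u * ν) (ρ - 10 * ε)) |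
        5 * ε ≤ if s then rinner (u * ν) w else -(rinner (u * ν) w)} =
      ((u : ℂ) * ·) '' {w ∈ closure (Qs ν (ρ + 10 * ε) \ Qs ν (ρ - 10 * ε)) |
        5 * ε ≤ if s then rinner ν w else -(rinner ν w)} := by
    rw [Qs_circle_mul, Qs_circle_mul, ← image_sdiff (isometry_circle_mul u).injective, hclosure]
    ext w
    simp only [mem_circle_mul_image, mem_ofPred_eq, rinner_circle_mul_left]
  simp only [bdry, hlayer, image_image, mul_add]

end Rotation

def LatIso.rotate (θ : ℝ) : LatIso → LatIso := Option.map fun z => (z.1 + θ, z.2)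

lemma LatIso.rotate_neg_rotate (θ : ℝ) (z : LatIso) : (z.rotate θ).rotate (-θ) = z := by
  cases z <;> simp [LatIso.rotate]

lemma rot_eq_circleExp (θ : ℝ) : rot θ = Circle.exp θ := (Circle.coe_exp θ).symm

lemma latt_rotate (θ : ℝ) (z : LatIso) :
    latt (z.rotate θ) = ((Circle.exp θ : ℂ) * ·) '' latt z := by
  cases z with
  | none => simp [LatIso.rotate, latt]
  | some z =>
    simp only [LatIso.rotate, Option.map_some, latt, image_image, rot_eq_circleExp,
      Circle.exp_add, Circle.coe_mul, mul_comm (Circle.exp z.1 : ℂ), mul_assoc]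

lemma scaledLatt_rotate (ε θ : ℝ) (z : LatIso) :
    scaledLatt ε (z.rotate θ) = ((Circle.exp θ : ℂ) * ·) '' scaledLatt ε z := by
  simp only [scaledLatt, latt_rotate, image_image, mul_left_comm]

lemma BC.rotate {ε ρ : ℝ} {ν x₀ : ℂ} {zp zm : LatIso} {X : Finset ℂ} (θ : ℝ)
    (h : BC ε ν ρ x₀ zp zm X) :
    BC ε (Circle.exp θ * ν) ρ (Circle.exp θ * x₀) (zp.rotate θ) (zm.rotate θ)
      (X.image ((Circle.exp θ : ℂ) * ·)) := by
  have hinj := (isometry_circle_mul (Circle.exp θ)).injective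
  simp only [BC, Finset.coe_image, bdry_circle_mul, scaledLatt_rotate, ← image_inter hinj,
    h.1, h.2, and_self]

lemma cellInf_rotate (θ : ℝ) (zp zm : LatIso) (ν : ℂ) (T : ℝ) :
    cellInf (zp.rotate θ) (zm.rotate θ) (rot θ * ν) T = cellInf zp zm ν T := by
  have hsub (θ : ℝ) (zp zm : LatIso) (ν : ℂ) :
      {e | ∃ y X, Admissible 1 X ∧ BC 1 ν T y zp zm X ∧ e = energy 1 X (Qc ν T y)} ⊆
        {e | ∃ y X, Admissible 1 X ∧ BC 1 (rot θ * ν) T y (zp.rotate θ) (zm.rotate θ) X ∧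
          e = energy 1 X (Qc (rot θ * ν) T y)} := by
    rintro e ⟨y, X, hX, hBC, rfl⟩
    have hu := isometry_circle_mul (Circle.exp θ)
    refine ⟨Circle.exp θ * y, X.image ((Circle.exp θ : ℂ) * ·), hX.image hu, ?_, ?_⟩
    · rw [rot_eq_circleExp]
      exact hBC.rotate θ
    · rw [rot_eq_circleExp, Qc_circle_mul, energy_image hu]
  refine congrArg sInf (Subset.antisymm ?_ (hsub θ zp zm ν))
  have hν : rot (-θ) * (rot θ * ν) = ν := by
    rw [← mul_assoc, rot_eq_circleExp, rot_eq_circleExp, ← Circle.coe_mul, ← Circle.exp_add,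
      neg_add_cancel, Circle.exp_zero, Circle.coe_one, one_mul]
  simpa only [LatIso.rotate_neg_rotate, hν] using hsub (-θ) (zp.rotate θ) (zm.rotate θ) (rot θ * ν)

lemma phiBar_rotate (θ : ℝ) (zp zm : LatIso) (ν : ℂ) :
    phiBar (zp.rotate θ) (zm.rotate θ) (rot θ * ν) = phiBar zp zm ν := by
  simp only [phiBar, cellInf_rotate]

theorem surface_energy_rotation_invariant_general (θp θm θ : ℝ) (τp τm : ℂ) (ν : ℂ) :
    phiBar (some (θp + θ, τp)) (some (θm + θ, τm)) (rot θ * ν) =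
      phiBar (some (θp, τp)) (some (θm, τm)) ν :=
  phiBar_rotate θ (some (θp, τp)) (some (θm, τm)) ν

/-- Rotational invariance of the surface energy density. -/
theorem surface_energy_rotation_invariant (θp θm θ : ℝ) (τp τm : ℂ)
    (ν : ℂ) (hν : ‖ν‖ = 1) :
    phiBar (some (θp + θ, τp)) (some (θm + θ, τm)) (rot θ * ν) =
      phiBar (some (θp, τp)) (some (θm, τm)) ν :=
  surface_energy_rotation_invariant_general θp θm θ τp τm ν

end HeitmannRadin
end
end

section
/- Translational invariance of the surface energy density (Theorem 'Properties of φ'(v)): For all θ⁺, θ⁻ ∈ ℝ, all τ⁺, τ⁻ ∈ ℝ², all ν ∈ S¹ and all τ ∈ ℝ² one has φ̄((θ⁺, τ⁺ + e^{−iθ⁺}τ, 1), (θ⁻, τ⁻ + e^{−iθ⁻}τ, 1), ν) = φ̄((θ⁺, τ⁺, 1), (θ⁻, τ⁻, 1), ν). -/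
open Filter Set

noncomputable section

namespace HeitmannRadin

/-! Translating a competitor by `τ` preserves admissibility and energy, and it carries the boundary
data `𝓛(θ, τ₀, 1)` on the cell centred at `y` to `𝓛(θ, τ₀ + e^{-iθ}τ, 1)` on the cell centred at
`y + τ`, because `e^{iθ}(𝓛 + τ₀ + e^{-iθ}τ) = e^{iθ}(𝓛 + τ₀) + τ`. Hence both cell problems have
the same set of energies for every `T`. -/

lemma Admissible.map {ε : ℝ} {X : Finset ℂ} (hX : Admissible ε X) {f : ℂ ↪ ℂ} (hf : Isometry f) :
    Admissible ε (X.map f) := by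
  simp only [Admissible, Finset.mem_map]
  rintro _ ⟨x, hx, rfl⟩ _ ⟨y, hy, rfl⟩ hxy
  rw [hf.dist_eq]
  exact hX x hx y hy (ne_of_apply_ne f hxy)

lemma nbhd_map_apply (ε : ℝ) (X : Finset ℂ) (x : ℂ) {f : ℂ ↪ ℂ} (hf : Isometry f) :
    nbhd ε (X.map f) (f x) = nbhd ε X x := by
  have hnbrs : {y ∈ (X.map f : Set ℂ) | dist (f x) y = ε} =
      f '' {y ∈ (X : Set ℂ) | dist x y = ε} := by
    ext y
    simp only [Finset.coe_map, Set.mem_ofPred_eq, Set.mem_image, Finset.mem_coe]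
    constructor
    · rintro ⟨⟨a, ha, rfl⟩, hd⟩
      exact ⟨a, ⟨ha, by rwa [hf.dist_eq] at hd⟩, rfl⟩
    · rintro ⟨a, ⟨ha, hd⟩, rfl⟩
      exact ⟨⟨a, ha, rfl⟩, by rwa [hf.dist_eq]⟩
  rw [nbhd, nbhd, hnbrs, Set.ncard_image_of_injective _ f.injective]

lemma energy_map (ε : ℝ) (X : Finset ℂ) (B : Set ℂ) {f : ℂ ↪ ℂ} (hf : Isometry f) :
    energy ε (X.map f) (f '' B) = energy ε X B := by
  simp only [energy, Finset.sum_map, nbhd_map_apply ε X _ hf, Set.indicator_image f.injective,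
    Function.comp_def]

lemma Qc_add_center (ν : ℂ) (ρ : ℝ) (x₀ τ : ℂ) :
    Qc ν ρ (x₀ + τ) = (· + τ) '' Qc ν ρ x₀ := by
  simp only [Qc, Set.image_image, add_right_comm]

lemma bdry_add_center (ε : ℝ) (ν : ℂ) (ρ : ℝ) (x₀ τ : ℂ) (s : Bool) :
    bdry ε ν ρ (x₀ + τ) s = (· + τ) '' bdry ε ν ρ x₀ s := by
  simp only [bdry, Set.image_image, add_right_comm]

lemma scaledLatt_one (z : LatIso) : scaledLatt 1 z = latt z := by
  simp [scaledLatt]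

lemma rot_mul_rot_neg (θ : ℝ) : rot θ * rot (-θ) = 1 := by
  rw [rot, rot, ← Complex.exp_add, Complex.ofReal_neg, neg_mul, add_neg_cancel, Complex.exp_zero]

lemma latt_some_add_rot_neg_mul (θ : ℝ) (τ₀ τ : ℂ) :
    latt (some (θ, τ₀ + rot (-θ) * τ)) = (· + τ) '' latt (some (θ, τ₀)) := by
  simp only [latt, Set.image_image]
  refine Set.image_congr fun v _ => ?_
  linear_combination τ * rot_mul_rot_neg θ

lemma BC.map_addRight {ε : ℝ} {ν : ℂ} {ρ : ℝ} {x₀ : ℂ} {zp zm zp' zm' : LatIso} {X : Finset ℂ}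
    {τ : ℂ} (h : BC ε ν ρ x₀ zp zm X) (hp : scaledLatt ε zp' = (· + τ) '' scaledLatt ε zp)
    (hm : scaledLatt ε zm' = (· + τ) '' scaledLatt ε zm) :
    BC ε ν ρ (x₀ + τ) zp' zm' (X.map (addRightEmbedding τ)) := by
  have hinj : Function.Injective (· + τ : ℂ → ℂ) := add_left_injective τ
  have hX : ((X.map (addRightEmbedding τ) : Finset ℂ) : Set ℂ) = (· + τ) '' X :=
    Finset.coe_map _ _
  simp only [BC, hX, bdry_add_center, hp, hm, ← Set.image_inter hinj, h.1, h.2, and_self]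

def cellEnergies (zp zm : LatIso) (ν : ℂ) (T : ℝ) : Set ℝ :=
  {e : ℝ | ∃ (y : ℂ) (X : Finset ℂ), Admissible 1 X ∧ BC 1 ν T y zp zm X ∧
    e = energy 1 X (Qc ν T y)}

lemma cellEnergies_subset_of_latt_eq_image_add {zp zm zp' zm' : LatIso} {τ : ℂ}
    (hp : latt zp' = (· + τ) '' latt zp) (hm : latt zm' = (· + τ) '' latt zm)
    (ν : ℂ) (T : ℝ) :
    cellEnergies zp zm ν T ⊆ cellEnergies zp' zm' ν T := by
  rintro _ ⟨y, X, hX, hBC, rfl⟩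
  rw [← scaledLatt_one, ← scaledLatt_one zp] at hp
  rw [← scaledLatt_one, ← scaledLatt_one zm] at hm
  refine ⟨y + τ, X.map (addRightEmbedding τ), hX.map (isometry_add_right τ),
    hBC.map_addRight hp hm, ?_⟩
  rw [Qc_add_center]
  exact (energy_map 1 X _ (isometry_add_right τ : Isometry (addRightEmbedding τ))).symm

lemma cellInf_eq_of_latt_eq_image_add {zp zm zp' zm' : LatIso} {τ : ℂ}
    (hp : latt zp' = (· + τ) '' latt zp) (hm : latt zm' = (· + τ) '' latt zm)
    (ν : ℂ) (T : ℝ) :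
    cellInf zp' zm' ν T = cellInf zp zm ν T := by
  have untranslate : ∀ {z z' : LatIso}, latt z' = (· + τ) '' latt z →
      latt z = (· + -τ) '' latt z' := fun h => by rw [h, Set.image_image]; simp
  exact congrArg sInf <|
    (cellEnergies_subset_of_latt_eq_image_add (untranslate hp) (untranslate hm) ν T).antisymm
      (cellEnergies_subset_of_latt_eq_image_add hp hm ν T)

theorem surface_energy_translation_invariant_general (θp θm : ℝ) (τp τm τ : ℂ)
    (ν : ℂ) :
    phiBar (some (θp, τp + rot (-θp) * τ)) (some (θm, τm + rot (-θm) * τ)) ν =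
      phiBar (some (θp, τp)) (some (θm, τm)) ν := by
  simp only [phiBar, cellInf_eq_of_latt_eq_image_add (latt_some_add_rot_neg_mul θp τp τ)
    (latt_some_add_rot_neg_mul θm τm τ)]

/-- Translational invariance of the surface energy density. -/
theorem surface_energy_translation_invariant (θp θm : ℝ) (τp τm τ : ℂ)
    (ν : ℂ) (hν : ‖ν‖ = 1) :
    phiBar (some (θp, τp + rot (-θp) * τ)) (some (θm, τm + rot (-θm) * τ)) ν =
      phiBar (some (θp, τp)) (some (θm, τm)) ν :=
  surface_energy_translation_invariant_general θp θm τp τm τ ν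

end HeitmannRadin
end
end
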